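/- Let X̄ solve min ‖X‖_* subject to A(X) = b, where A : R^{n×p} → E is linear. If (i) the relative interior of ∂‖·‖_*(X̄) intersects the range of the adjoint A*, and (ii) par(∂‖·‖_*(X̄)) + rge A* = R^{n×p}, then X̄ is the unique solution. -/

import Mathlib

open Matrix

noncomputable def nuclearNorm {m n : Type*} [Fintype m] [Fintype n] [DecidableEq n]
    (A : Matrix m n ℝ) : ℝ :=
  ((Matrix.posSemidef_conjTranspose_mul_self A).1.eigenvectorUnitary *
    diagonal (((↑) : ℝ → ℝ) ∘ (√·) ∘ (Matrix.posSemidef_conjTranspose_mul_self A).1.eigenvalues) *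
    (star (Matrix.posSemidef_conjTranspose_mul_self A).1.eigenvectorUnitary : Matrix n n ℝ)).trace

noncomputable def opNorm {m n : Type*} [Fintype m] [Fintype n] [DecidableEq m] [DecidableEq n]
    (A : Matrix m n ℝ) : ℝ :=
  ‖(LinearMap.toContinuousLinearMap
      (Matrix.toEuclideanLin A : EuclideanSpace ℝ n →ₗ[ℝ] EuclideanSpace ℝ m))‖

def finner {m n : Type*} [Fintype m] [Fintype n] (A B : Matrix m n ℝ) : ℝ :=
  (Aᵀ * B).trace

noncomputable def nuclearSubdiff {m n : Type*} [Fintype m] [Fintype n] [DecidableEq n]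
    (X : Matrix m n ℝ) : Set (Matrix m n ℝ) :=
  {Y | ∀ Z, nuclearNorm X + finner Y (Z - X) ≤ nuclearNorm Z}

def rectDiag (n p : ℕ) (s : Fin p → ℝ) : Matrix (Fin n) (Fin p) ℝ :=
  Matrix.of fun i j => if (i : ℕ) = (j : ℕ) then s j else 0

def blockIR (n p r : ℕ) (R : Matrix (Fin (n - r)) (Fin (p - r)) ℝ) :
    Matrix (Fin n) (Fin p) ℝ :=
  Matrix.of fun i j =>
    if h : (i : ℕ) < r ∨ (j : ℕ) < r then (if (i : ℕ) = (j : ℕ) then 1 else 0)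
    else R ⟨i - r, by have := i.isLt; omega⟩ ⟨j - r, by have := j.isLt; omega⟩

/-- The range of the adjoint $\mathcal{A}^*$, described via the Frobenius inner product. -/
def rgeAstar {n p : ℕ} {E : Type*} [NormedAddCommGroup E] [InnerProductSpace ℝ E]
    (A : Matrix (Fin n) (Fin p) ℝ →ₗ[ℝ] E) : Set (Matrix (Fin n) (Fin p) ℝ) :=
  {M | ∃ y : E, ∀ Z, finner M Z = (inner ℝ y (A Z) : ℝ)}

/-!
If `X` is a second minimiser, `D = X - Xb` lies in `ker A`, so `D` is Frobenius-orthogonal to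
`rge A*`. The subgradient inequality at `X` shows that `G ↦ ⟪G, D⟫` is `≤ 0` on `∂‖·‖_*(Xb)`, and
it vanishes at the point `Y ∈ ri ∂‖·‖_*(Xb) ∩ rge A*`. A linear functional attaining its maximum
over a set at a relative-interior point is constant on it, so `D` is also orthogonal to
`par ∂‖·‖_*(Xb)`. By (ii) `D` is orthogonal to every matrix, hence `D = 0`.
-/

section IntrinsicInterior

variable {V : Type*} [AddCommGroup V] [Module ℝ V] [TopologicalSpace V]
  [IsTopologicalAddGroup V] [ContinuousSMul ℝ V] {s : Set V} {Y G : V}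

lemma exists_pos_add_smul_sub_mem_of_mem_intrinsicInterior
    (hY : Y ∈ intrinsicInterior ℝ s) (hG : G ∈ s) :
    ∃ t : ℝ, 0 < t ∧ Y + t • (Y - G) ∈ s := by
  obtain ⟨y, hy, rfl⟩ := mem_intrinsicInterior.1 hY
  let ray : ℝ → affineSpan ℝ s := fun t =>
    ⟨AffineMap.lineMap (y : V) G (-t), AffineMap.lineMap_mem _ y.2 (subset_affineSpan ℝ s hG)⟩
  have hray : Continuous ray := by
    apply Continuous.subtype_mk
    fun_prop
  have hnhds : ∀ᶠ t in nhds (0 : ℝ), ray t ∈ interior ((↑) ⁻¹' s) :=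
    hray.continuousAt.preimage_mem_nhds <| isOpen_interior.mem_nhds <| by simpa [ray] using hy
  obtain ⟨t, ht, htpos⟩ :=
    ((hnhds.filter_mono nhdsWithin_le_nhds).and (self_mem_nhdsWithin (s := Set.Ioi 0))).exists
  refine ⟨t, htpos, ?_⟩
  have hts : ray t ∈ ((↑) ⁻¹' s : Set (affineSpan ℝ s)) := interior_subset ht
  convert Set.mem_preimage.1 hts using 1
  simp only [ray, AffineMap.lineMap_apply_module', neg_smul, smul_sub]
  abel

lemma LinearMap.eq_of_isMaxOn_of_mem_intrinsicInterior (f : V →ₗ[ℝ] ℝ)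
    (hY : Y ∈ intrinsicInterior ℝ s) (hmax : IsMaxOn f s Y) (hG : G ∈ s) : f G = f Y := by
  obtain ⟨t, ht, hmem⟩ := exists_pos_add_smul_sub_mem_of_mem_intrinsicInterior hY hG
  have hbeyond : f (Y + t • (Y - G)) ≤ f Y := hmax hmem
  rw [map_add, map_smul, map_sub, smul_eq_mul] at hbeyond
  have hGY : f G ≤ f Y := hmax hG
  nlinarith

lemma LinearMap.vectorSpan_le_ker_of_isMaxOn_of_mem_intrinsicInterior (f : V →ₗ[ℝ] ℝ)
    (hY : Y ∈ intrinsicInterior ℝ s) (hmax : IsMaxOn f s Y) :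
    vectorSpan ℝ s ≤ LinearMap.ker f := by
  rw [vectorSpan_def, Submodule.span_le]
  rintro _ ⟨G, hG, H, hH, rfl⟩
  simp [f.eq_of_isMaxOn_of_mem_intrinsicInterior hY hmax hG,
    f.eq_of_isMaxOn_of_mem_intrinsicInterior hY hmax hH]

end IntrinsicInterior

section Frobenius

variable {m n : Type*} [Fintype m] [Fintype n]

def finnerLeft (Z : Matrix m n ℝ) : Matrix m n ℝ →ₗ[ℝ] ℝ where
  toFun M := finner M Z
  map_add' M N := by simp [finner, Matrix.add_mul, Matrix.trace_add]
  map_smul' c M := by simp [finner, Matrix.trace_smul]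

@[simp]
lemma finnerLeft_apply (Z M : Matrix m n ℝ) : finnerLeft Z M = finner M Z := rfl

lemma finner_self_eq_zero_iff {M : Matrix m n ℝ} : finner M M = 0 ↔ M = 0 := by
  rw [finner, ← Matrix.conjTranspose_eq_transpose_of_trivial,
    Matrix.trace_conjTranspose_mul_self_eq_zero_iff]

end Frobenius

lemma finner_eq_zero_of_mem_rgeAstar {n p : ℕ} {E : Type*} [NormedAddCommGroup E]
    [InnerProductSpace ℝ E] {A : Matrix (Fin n) (Fin p) ℝ →ₗ[ℝ] E}
    {M Z : Matrix (Fin n) (Fin p) ℝ} (hM : M ∈ rgeAstar A) (hZ : A Z = 0) : finner M Z = 0 := by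
  obtain ⟨y, hy⟩ := hM
  rw [hy, hZ, inner_zero_right]

open Pointwise in
theorem unique_solution_of_suff_conditions_general {n p : ℕ} {E : Type*}
    [NormedAddCommGroup E] [InnerProductSpace ℝ E]
    (A : Matrix (Fin n) (Fin p) ℝ →ₗ[ℝ] E) (b : E)
    (Xb : Matrix (Fin n) (Fin p) ℝ)
    (hfeas : A Xb = b)
    (hri : (intrinsicInterior ℝ (nuclearSubdiff Xb) ∩ rgeAstar A).Nonempty)
    (hpar : (↑(vectorSpan ℝ (nuclearSubdiff Xb)) : Set (Matrix (Fin n) (Fin p) ℝ))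
        + rgeAstar A = Set.univ) :
    ∀ X, A X = b → nuclearNorm X = nuclearNorm Xb → X = Xb := by
  intro X hX hnorm
  have hker : A (X - Xb) = 0 := by rw [map_sub, hX, hfeas, sub_self]
  obtain ⟨Y, hYri, hYrge⟩ := hri
  have hmax : IsMaxOn (finnerLeft (X - Xb)) (nuclearSubdiff Xb) Y := fun G hG => by
    show finner G (X - Xb) ≤ finner Y (X - Xb)
    linarith [hG X, finner_eq_zero_of_mem_rgeAstar hYrge hker]
  have hspan := (finnerLeft (X - Xb)).vectorSpan_le_ker_of_isMaxOn_of_mem_intrinsicInterior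
    hYri hmax
  obtain ⟨V, hV, M, hM, hVM : V + M = X - Xb⟩ := hpar ▸ Set.mem_univ (X - Xb)
  have hself : finner (X - Xb) (X - Xb) = 0 := calc
    finner (X - Xb) (X - Xb) = finnerLeft (X - Xb) (V + M) := by rw [hVM, finnerLeft_apply]
    _ = 0 := by
      rw [map_add, LinearMap.mem_ker.1 (hspan hV), finnerLeft_apply,
        finner_eq_zero_of_mem_rgeAstar hM hker, add_zero]
  exact sub_eq_zero.1 (finner_self_eq_zero_iff.1 hself)

open Pointwise in
theorem unique_solution_of_suff_conditions {n p : ℕ} {E : Type*}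
    [NormedAddCommGroup E] [InnerProductSpace ℝ E] [FiniteDimensional ℝ E]
    (A : Matrix (Fin n) (Fin p) ℝ →ₗ[ℝ] E) (b : E)
    (Xb : Matrix (Fin n) (Fin p) ℝ)
    (hfeas : A Xb = b)
    (hmin : ∀ X, A X = b → nuclearNorm Xb ≤ nuclearNorm X)
    (hri : (intrinsicInterior ℝ (nuclearSubdiff Xb) ∩ rgeAstar A).Nonempty)
    (hpar : (↑(vectorSpan ℝ (nuclearSubdiff Xb)) : Set (Matrix (Fin n) (Fin p) ℝ))
        + rgeAstar A = Set.univ) :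
    ∀ X, A X = b → nuclearNorm X = nuclearNorm Xb → X = Xb :=
  unique_solution_of_suff_conditions_general A b Xb hfeas hri hpar
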